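/- (Lemma 4 of the paper.) Let A ∈ ℝ^{n×n}, K ∈ ℝ^{r×n}, and let C₁ ∈ ℝ^{p₁×n}, …, C_l ∈ ℝ^{p_l×n} be output matrices, with C̃ ∈ ℝ^{(p₁+⋯+p_l)×n} the matrix obtained by vertically stacking C₁, …, C_l. Then the system is jointly partially detectable with respect to K — i.e., for every differentiable x : ℝ → ℝⁿ with x'(t) = A x(t) and C_i x(t) = 0 for all t ≥ 0 and all i = 1,…,l, one has K x(t) → 0 as t → ∞ — if and only if for every λ ∈ ℂ with Re λ ≥ 0, the rank of the complex matrix obtained by stacking D_{[A,C̃],n,λ} on top of K equals the rank of D_{[A,C̃],n,λ}. -/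

import Mathlib

open Matrix

/-- The stacked matrix `D_{[A,C],k,λ}`, obtained by vertically stacking the blocks
`C, C(λI−A), C(λI−A)², …, C(λI−A)^{k−1}` and `(λI−A)^k`, with real matrices coerced
entrywise into `ℂ`. Rows of the block `C(λI−A)^j` are indexed by `(j, row of C)`. -/
noncomputable def Dstack {n : ℕ} {p : Type*} (k : ℕ) (A : Matrix (Fin n) (Fin n) ℝ)
    (C : Matrix p (Fin n) ℝ) (lam : ℂ) : Matrix ((Fin k × p) ⊕ Fin n) (Fin n) ℂ :=
  Matrix.fromRows
    (Matrix.of fun ki j =>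
      ((C.map Complex.ofReal) *
        (lam • (1 : Matrix (Fin n) (Fin n) ℂ) - A.map Complex.ofReal) ^ (ki.1 : ℕ)) ki.2 j)
    ((lam • (1 : Matrix (Fin n) (Fin n) ℂ) - A.map Complex.ofReal) ^ k)

/-!
Via complexification, partial detectability only concerns the trajectories `K e^{tA} u` with `u`
in the unobservable subspace `W = ⋂ⱼ ker C̃Aʲ`, the initial states compatible with `C̃ x ≡ 0`.
Splitting `u` into generalized eigenvectors of `A` inside `W`, the components with `Re μ < 0`
decay, so detectability holds iff `K` vanishes on `W ∩ ker (A - μ)ⁿ` whenever `Re μ ≥ 0`;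
conversely, if `K` does not vanish there, a suitable `w` in that space has
`K e^{tA} w = e^{tμ} K w`, which does not decay. Finally, `W ∩ ker (A - μ)ⁿ` is exactly the kernel
of `D_{[A,C̃],n,μ}`, and appending the rows of `K` keeps the rank iff `K` vanishes on that kernel.
-/

open Filter Topology NormedSpace
open scoped Nat

theorem Nat.exists_ne_zero_forall_lt_eq_zero {M : Type*} [Zero M] {g : ℕ → M} {k : ℕ}
    (h0 : g 0 ≠ 0) (hk : ∀ j, k ≤ j → g j = 0) : ∃ s, g s ≠ 0 ∧ ∀ j, s < j → g j = 0 := by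
  classical
  refine ⟨Nat.findGreatest (fun j => g j ≠ 0) k,
    Nat.findGreatest_spec (P := fun j => g j ≠ 0) (zero_le k) h0, fun j hj => ?_⟩
  by_contra hne
  rcases le_or_gt j k with hjk | hjk
  · exact Nat.findGreatest_is_greatest hj hjk hne
  · exact hne (hk j hjk.le)

theorem tendsto_pow_mul_exp_mul_atTop_nhds_zero {c : ℝ} (hc : c < 0) (j : ℕ) :
    Tendsto (fun t : ℝ => t ^ j * Real.exp (c * t)) atTop (𝓝 0) := by
  simpa using tendsto_rpow_mul_exp_neg_mul_atTop_nhds_zero j (-c) (neg_pos.2 hc)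

theorem HasDerivAt.const_matrix_mulVec {ι κ : Type*} [Fintype ι] [Fintype κ] (L : Matrix κ ι ℂ)
    {z : ℝ → ι → ℂ} {z' : ι → ℂ} {t : ℝ} (h : HasDerivAt z z' t) :
    HasDerivAt (fun s => L *ᵥ z s) (L *ᵥ z') t :=
  (L.mulVecLin.restrictScalars ℝ).toContinuousLinearMap.hasFDerivAt.comp_hasDerivAt t h

namespace Matrix

theorem ker_mulVecLin_fromRows {m₁ m₂ ι R : Type*} [Fintype ι] [CommSemiring R]
    (M : Matrix m₁ ι R) (N : Matrix m₂ ι R) :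
    LinearMap.ker (fromRows M N).mulVecLin =
      LinearMap.ker M.mulVecLin ⊓ LinearMap.ker N.mulVecLin := by
  ext v
  simp only [LinearMap.mem_ker, mulVecLin_apply, Submodule.mem_inf, fromRows_mulVec,
    ← Sum.elim_zero_zero, Sum.elim_eq_iff]

theorem rank_fromRows_eq_rank_iff {m₁ m₂ ι K : Type*} [Fintype m₁] [Fintype m₂] [Fintype ι]
    [Field K] (M : Matrix m₁ ι K) (N : Matrix m₂ ι K) :
    (fromRows M N).rank = M.rank ↔ LinearMap.ker M.mulVecLin ≤ LinearMap.ker N.mulVecLin := by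
  have hle : LinearMap.ker (fromRows M N).mulVecLin ≤ LinearMap.ker M.mulVecLin := by
    rw [ker_mulVecLin_fromRows]
    exact inf_le_left
  have h₁ := LinearMap.finrank_range_add_finrank_ker (fromRows M N).mulVecLin
  have h₂ := LinearMap.finrank_range_add_finrank_ker M.mulVecLin
  rw [← inf_eq_left, ← ker_mulVecLin_fromRows, eq_comm]
  constructor
  · intro h
    exact Submodule.eq_of_le_of_finrank_eq hle (by unfold rank at h; omega)
  · intro h
    unfold rank
    rw [h] at h₁
    omega

theorem pow_mulVec_eq_zero_of_le {ι R : Type*} [Fintype ι] [DecidableEq ι] [CommSemiring R]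
    {M : Matrix ι ι R} {u : ι → R} {k j : ℕ} (hk : M ^ k *ᵥ u = 0) (hj : k ≤ j) :
    M ^ j *ᵥ u = 0 := by
  rw [← Nat.sub_add_cancel hj, pow_add, ← mulVec_mulVec, hk, mulVec_zero]

section Unobservable

variable {ι κ R : Type*} [Fintype ι] [DecidableEq ι] [CommRing R]

def unobservableSubspace (A : Matrix ι ι R) (C : Matrix κ ι R) : Submodule R (ι → R) :=
  ⨅ j : ℕ, LinearMap.ker (C * A ^ j).mulVecLin

variable {A : Matrix ι ι R} {C : Matrix κ ι R} {u : ι → R}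

theorem mem_unobservableSubspace_iff :
    u ∈ unobservableSubspace A C ↔ ∀ j : ℕ, C *ᵥ (A ^ j *ᵥ u) = 0 := by
  simp only [unobservableSubspace, Submodule.mem_iInf, LinearMap.mem_ker, mulVecLin_apply,
    mulVec_mulVec]

theorem mulVec_eq_zero_of_mem_unobservableSubspace (hu : u ∈ unobservableSubspace A C) :
    C *ᵥ u = 0 := by
  simpa using mem_unobservableSubspace_iff.1 hu 0

theorem pow_mulVec_mem_unobservableSubspace (hu : u ∈ unobservableSubspace A C) (i : ℕ) :
    A ^ i *ᵥ u ∈ unobservableSubspace A C :=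
  mem_unobservableSubspace_iff.2 fun j => by
    simpa [mulVec_mulVec, ← pow_add] using mem_unobservableSubspace_iff.1 hu (j + i)

theorem mulVec_mem_unobservableSubspace (hu : u ∈ unobservableSubspace A C) :
    A *ᵥ u ∈ unobservableSubspace A C := by
  simpa using pow_mulVec_mem_unobservableSubspace hu 1

theorem mem_unobservableSubspace_iff_of_pow_mulVec_eq_zero {k : ℕ} (hk : A ^ k *ᵥ u = 0) :
    u ∈ unobservableSubspace A C ↔ ∀ j < k, C *ᵥ (A ^ j *ᵥ u) = 0 := by
  refine mem_unobservableSubspace_iff.trans ⟨fun h j _ => h j, fun h j => ?_⟩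
  rcases lt_or_ge j k with hj | hj
  · exact h j hj
  · rw [pow_mulVec_eq_zero_of_le hk hj, mulVec_zero]

theorem le_unobservableSubspace {S : Submodule R (ι → R)} (hA : ∀ v ∈ S, A *ᵥ v ∈ S)
    (hC : ∀ v ∈ S, C *ᵥ v = 0) : S ≤ unobservableSubspace A C := by
  intro v hv
  have hpow : ∀ j : ℕ, A ^ j *ᵥ v ∈ S := fun j => by
    induction j with
    | zero => simpa using hv
    | succ j ih =>
      rw [pow_succ', ← mulVec_mulVec]
      exact hA _ ih
  exact mem_unobservableSubspace_iff.2 fun j => hC _ (hpow j)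

theorem unobservableSubspace_sub_smul_one (μ : R) :
    unobservableSubspace (A - μ • 1) C = unobservableSubspace A C := by
  refine le_antisymm (le_unobservableSubspace (fun v hv => ?_)
    fun v => mulVec_eq_zero_of_mem_unobservableSubspace)
    (le_unobservableSubspace (fun v hv => ?_) fun v => mulVec_eq_zero_of_mem_unobservableSubspace)
  · have h : A *ᵥ v = (A - μ • 1) *ᵥ v + μ • v := by simp [sub_mulVec, smul_mulVec]
    rw [h]
    exact add_mem (mulVec_mem_unobservableSubspace hv) (Submodule.smul_mem _ μ hv)
  · rw [sub_mulVec, smul_mulVec, one_mulVec]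
    exact sub_mem (mulVec_mem_unobservableSubspace hv) (Submodule.smul_mem _ μ hv)

theorem unobservableSubspace_neg : unobservableSubspace (-A) C = unobservableSubspace A C := by
  refine le_antisymm (le_unobservableSubspace (fun v hv => ?_)
    fun v => mulVec_eq_zero_of_mem_unobservableSubspace)
    (le_unobservableSubspace (fun v hv => ?_) fun v => mulVec_eq_zero_of_mem_unobservableSubspace)
  · simpa [neg_mulVec] using neg_mem (mulVec_mem_unobservableSubspace hv)
  · simpa [neg_mulVec] using neg_mem (mulVec_mem_unobservableSubspace hv)

end Unobservable

section ComplexExp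

variable {ι κ : Type*} [Fintype ι] [DecidableEq ι]

theorem exists_sum_eq_of_mem_of_mulVec_mem (M : Matrix ι ι ℂ) {S : Submodule ℂ (ι → ℂ)}
    (hS : ∀ v ∈ S, M *ᵥ v ∈ S) {u : ι → ℂ} (hu : u ∈ S) :
    ∃ (s : Finset ℂ) (w : ℂ → ι → ℂ),
      (∀ μ ∈ s, w μ ∈ S ∧ (M - μ • 1) ^ Fintype.card ι *ᵥ w μ = 0) ∧ ∑ μ ∈ s, w μ = u := by
  set f : Module.End ℂ (ι → ℂ) := toLinAlgEquiv' M
  have hu' : u ∈ ⨆ μ, S ⊓ f.maxGenEigenspace μ := by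
    rw [← Submodule.inf_iSup_genEigenspace (f := f) hS,
      Module.End.iSup_maxGenEigenspace_eq_top, inf_top_eq]
    exact hu
  obtain ⟨w, hw, rfl⟩ := (Submodule.mem_iSup_iff_exists_finsupp _ _).1 hu'
  refine ⟨w.support, w, fun μ _ => ?_, rfl⟩
  obtain ⟨hwS, hgen⟩ := Submodule.mem_inf.1 (hw μ)
  refine ⟨hwS, ?_⟩
  rwa [Module.End.maxGenEigenspace_eq_genEigenspace_finrank, Module.finrank_fintype_fun_eq_card,
    Module.End.mem_genEigenspace_nat, LinearMap.mem_ker,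
    ← map_one (toLinAlgEquiv' (R := ℂ) (n := ι)), ← map_smul, ← map_sub, ← map_pow,
    toLinAlgEquiv'_apply] at hgen

theorem hasSum_mulVec_exp_smul_mulVec (L : Matrix κ ι ℂ) (M : Matrix ι ι ℂ) (u : ι → ℂ)
    (t : ℝ) :
    HasSum (fun j : ℕ => (t ^ j / j !) • (L *ᵥ (M ^ j *ᵥ u))) (L *ᵥ (exp (t • M) *ᵥ u)) := by
  let : NormedRing (Matrix ι ι ℂ) := Matrix.linftyOpNormedRing
  let : NormedAlgebra ℝ (Matrix ι ι ℂ) := Matrix.linftyOpNormedAlgebra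
  have h := (exp_series_hasSum_exp' (𝕂 := ℝ) (t • M)).map
    (L.mulVecLin.toAddMonoidHom.comp (mulVec.addMonoidHomLeft u))
    (continuous_const.matrix_mulVec (continuous_id.matrix_mulVec continuous_const))
  simp only [Function.comp_def, AddMonoidHom.coe_comp, mulVec.addMonoidHomLeft,
    AddMonoidHom.coe_mk, ZeroHom.coe_mk, LinearMap.toAddMonoidHom_coe, mulVecLin_apply,
    smul_pow, smul_mulVec, mulVec_smul, smul_smul, ← div_eq_inv_mul] at h
  exact h

theorem mulVec_exp_smul_mulVec_eq_zero {L : Matrix κ ι ℂ} {M : Matrix ι ι ℂ} {u : ι → ℂ}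
    (hu : u ∈ unobservableSubspace M L) (t : ℝ) : L *ᵥ (exp (t • M) *ᵥ u) = 0 := by
  refine (hasSum_mulVec_exp_smul_mulVec L M u t).unique ?_
  simp [mem_unobservableSubspace_iff.1 hu, hasSum_zero]

theorem mulVec_exp_smul_mulVec_eq_mulVec {L : Matrix κ ι ℂ} {M : Matrix ι ι ℂ} {u : ι → ℂ}
    (hu : M *ᵥ u ∈ unobservableSubspace M L) (t : ℝ) : L *ᵥ (exp (t • M) *ᵥ u) = L *ᵥ u := by
  refine (hasSum_mulVec_exp_smul_mulVec L M u t).unique ?_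
  convert hasSum_single 0 fun j (hj : j ≠ 0) => ?_ using 1
  · simp
  · obtain ⟨i, rfl⟩ := Nat.exists_eq_add_one_of_ne_zero hj
    rw [pow_succ M i, ← mulVec_mulVec, mem_unobservableSubspace_iff.1 hu i, smul_zero]

theorem exp_smul_mulVec_eq_sum {M : Matrix ι ι ℂ} {u : ι → ℂ} {k : ℕ} (hk : M ^ k *ᵥ u = 0)
    (t : ℝ) : exp (t • M) *ᵥ u = ∑ j ∈ Finset.range k, (t ^ j / j !) • (M ^ j *ᵥ u) := by
  have h := hasSum_mulVec_exp_smul_mulVec (1 : Matrix ι ι ℂ) M u t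
  simp only [one_mulVec] at h
  exact h.unique <| hasSum_sum_of_ne_finset_zero fun j hj => by
    rw [pow_mulVec_eq_zero_of_le hk (by simpa using hj), smul_zero]

theorem exp_smul_eq_exp_smul_exp_smul_sub_smul_one (M : Matrix ι ι ℂ) (μ : ℂ) (t : ℝ) :
    exp (t • M) = Complex.exp (t * μ) • exp (t • (M - μ • 1)) := by
  let : NormedRing (Matrix ι ι ℂ) := Matrix.linftyOpNormedRing
  let : NormedAlgebra ℂ (Matrix ι ι ℂ) := Matrix.linftyOpNormedAlgebra
  have hcomm : Commute ((t * μ) • (1 : Matrix ι ι ℂ)) (t • (M - μ • 1)) :=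
    ((Commute.one_left _).smul_left _).smul_right _
  have hscalar : exp ((t * μ) • (1 : Matrix ι ι ℂ)) = Complex.exp (t * μ) • 1 := by
    have h := algebraMap_exp_comm (𝕂 := ℂ) (𝔸 := Matrix ι ι ℂ) (t * μ)
    rwa [← Complex.exp_eq_exp_ℂ, Algebra.algebraMap_eq_smul_one, Algebra.algebraMap_eq_smul_one,
      eq_comm] at h
  rw [← smul_one_mul (Complex.exp (t * μ)), ← hscalar, ← exp_add_of_commute _ _ hcomm, smul_sub,
    ← smul_assoc, Complex.real_smul, add_sub_cancel]

theorem tendsto_exp_smul_mulVec_nhds_zero {M : Matrix ι ι ℂ} {u : ι → ℂ} {μ : ℂ} {k : ℕ}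
    (hμ : μ.re < 0) (hk : (M - μ • 1) ^ k *ᵥ u = 0) :
    Tendsto (fun t : ℝ => exp (t • M) *ᵥ u) atTop (𝓝 0) := by
  simp_rw [exp_smul_eq_exp_smul_exp_smul_sub_smul_one M μ, smul_mulVec,
    exp_smul_mulVec_eq_sum hk, Finset.smul_sum]
  rw [← Finset.sum_const_zero]
  refine tendsto_finsetSum _ fun j _ => ?_
  rw [tendsto_zero_iff_norm_tendsto_zero]
  refine ((((tendsto_pow_mul_exp_mul_atTop_nhds_zero hμ j).div_const (j ! : ℝ)).mul_const
    ‖(M - μ • 1) ^ j *ᵥ u‖).congr' ?_).trans_eq (by simp)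
  filter_upwards [eventually_ge_atTop 0] with t ht
  rw [norm_smul, norm_smul, Complex.norm_exp, Complex.re_ofReal_mul, Real.norm_of_nonneg
    (by positivity), mul_comm t μ.re]
  ring

theorem hasDerivAt_exp_smul_mulVec (M : Matrix ι ι ℂ) (u : ι → ℂ) (t : ℝ) :
    HasDerivAt (fun s : ℝ => exp (s • M) *ᵥ u) (M *ᵥ (exp (t • M) *ᵥ u)) t := by
  let : NormedRing (Matrix ι ι ℂ) := Matrix.linftyOpNormedRing
  let : NormedAlgebra ℝ (Matrix ι ι ℂ) := Matrix.linftyOpNormedAlgebra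
  rw [mulVec_mulVec]
  exact ((mulVecBilin ℝ ℂ).flip u).toContinuousLinearMap.hasFDerivAt.comp_hasDerivAt t
    (hasDerivAt_exp_smul_const' (𝕂 := ℝ) M t)

theorem eq_exp_smul_mulVec_of_hasDerivAt (M : Matrix ι ι ℂ) {z : ℝ → ι → ℂ}
    (hz : ∀ t, 0 ≤ t → HasDerivAt z (M *ᵥ z t) t) {t : ℝ} (ht : 0 ≤ t) :
    z t = exp (t • M) *ᵥ z 0 := by
  have hlip : LipschitzWith _ (M.mulVecLin.restrictScalars ℝ).toContinuousLinearMap :=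
    ContinuousLinearMap.lipschitz _
  refine ODE_solution_unique_of_mem_Icc_right (v := fun _ y => M *ᵥ y) (s := fun _ => Set.univ)
    (fun _ _ => hlip.lipschitzOnWith) ?_ (fun s hs => (hz s hs.1).hasDerivWithinAt)
    (fun _ _ => trivial) ?_ (fun s _ => (hasDerivAt_exp_smul_mulVec M (z 0) s).hasDerivWithinAt)
    (fun _ _ => trivial) (by simp) ⟨ht, le_rfl⟩
  · exact fun s hs => (hz s hs.1).continuousAt.continuousWithinAt
  · exact fun s _ => (hasDerivAt_exp_smul_mulVec M (z 0) s).continuousAt.continuousWithinAt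

theorem mem_unobservableSubspace_of_hasDerivAt [Fintype κ] {M : Matrix ι ι ℂ} {L : Matrix κ ι ℂ}
    {z : ℝ → ι → ℂ} (hz : ∀ t, 0 ≤ t → HasDerivAt z (M *ᵥ z t) t)
    (hL : ∀ t, 0 ≤ t → L *ᵥ z t = 0) : z 0 ∈ unobservableSubspace M L := by
  suffices h : ∀ j : ℕ, ∀ t, 0 ≤ t → (L * M ^ j) *ᵥ z t = 0 from
    mem_unobservableSubspace_iff.2 fun j => by rw [mulVec_mulVec]; exact h j 0 le_rfl
  intro j
  induction j with
  | zero => simpa using hL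
  | succ j ih =>
    intro t ht
    -- `s ↦ L Mʲ z s` vanishes on `[t, ∞)`, so its right derivative `L Mʲ⁺¹ z t` at `t` is zero.
    have hderiv := ((hz t ht).const_matrix_mulVec (L * M ^ j)).hasDerivWithinAt (s := Set.Ici t)
    have hzero : HasDerivWithinAt (fun s => (L * M ^ j) *ᵥ z s) 0 (Set.Ici t) t :=
      (hasDerivWithinAt_const t _ 0).congr (fun s hs => ih s (ht.trans hs)) (ih t ht)
    rw [pow_succ, ← Matrix.mul_assoc, ← mulVec_mulVec]
    exact (uniqueDiffOn_Ici t t Set.self_mem_Ici).eq_deriv _ hderiv hzero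

end ComplexExp

section Spectral

variable {ι κ ρ : Type*} [Fintype ι] [DecidableEq ι] {M : Matrix ι ι ℂ} {L : Matrix κ ι ℂ}
  {K : Matrix ρ ι ℂ}

theorem tendsto_mulVec_exp_smul_mulVec_nhds_zero
    (hK : ∀ μ : ℂ, 0 ≤ μ.re → ∀ v ∈ unobservableSubspace M L,
      (M - μ • 1) ^ Fintype.card ι *ᵥ v = 0 → K *ᵥ v = 0)
    {u : ι → ℂ} (hu : u ∈ unobservableSubspace M L) :
    Tendsto (fun t : ℝ => K *ᵥ (exp (t • M) *ᵥ u)) atTop (𝓝 0) := by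
  obtain ⟨s, w, hw, rfl⟩ :=
    exists_sum_eq_of_mem_of_mulVec_mem M (fun _ => mulVec_mem_unobservableSubspace) hu
  simp_rw [mulVec_sum]
  rw [← Finset.sum_const_zero]
  refine tendsto_finsetSum _ fun μ hμ => ?_
  obtain ⟨hwW, hwgen⟩ := hw μ hμ
  rcases lt_or_ge μ.re 0 with hre | hre
  · exact ((continuous_const.matrix_mulVec continuous_id).tendsto' 0 0 (mulVec_zero K)).comp
      (tendsto_exp_smul_mulVec_nhds_zero hre hwgen)
  · set N := (M - μ • 1) ^ Fintype.card ι
    have hNM : N * M = M * N :=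
      (((Commute.refl M).sub_left ((Commute.one_left M).smul_left μ)).pow_left _).eq
    have hS : unobservableSubspace M L ⊓ LinearMap.ker N.mulVecLin ≤ unobservableSubspace M K :=
      le_unobservableSubspace
        (fun v hv => ⟨mulVec_mem_unobservableSubspace hv.1, by
          rw [SetLike.mem_coe, LinearMap.mem_ker, mulVecLin_apply, mulVec_mulVec, hNM,
            ← mulVec_mulVec, show N *ᵥ v = 0 from hv.2, mulVec_zero]⟩)
        fun v hv => hK μ hre v hv.1 hv.2
    simp only [mulVec_exp_smul_mulVec_eq_zero (hS ⟨hwW, hwgen⟩)]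
    exact tendsto_const_nhds

theorem mulVec_eq_zero_of_tendsto_mulVec_exp_smul_mulVec [Fintype ρ]
    (hK : ∀ u ∈ unobservableSubspace M L,
      Tendsto (fun t : ℝ => K *ᵥ (exp (t • M) *ᵥ u)) atTop (𝓝 0))
    {μ : ℂ} (hμ : 0 ≤ μ.re) {v : ι → ℂ} (hv : v ∈ unobservableSubspace M L) {k : ℕ}
    (hk : (M - μ • 1) ^ k *ᵥ v = 0) : K *ᵥ v = 0 := by
  set N := M - μ • 1
  by_contra hKv
  obtain ⟨s, hs, hlast⟩ := Nat.exists_ne_zero_forall_lt_eq_zero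
    (g := fun j => K *ᵥ (N ^ j *ᵥ v)) (k := k) (by simpa using hKv)
    fun j hj => by simp [pow_mulVec_eq_zero_of_le hk hj]
  set w := N ^ s *ᵥ v
  have hwW : w ∈ unobservableSubspace M L := by
    rw [← unobservableSubspace_sub_smul_one μ] at hv ⊢
    exact pow_mulVec_mem_unobservableSubspace hv s
  have hNw : N *ᵥ w ∈ unobservableSubspace N K := mem_unobservableSubspace_iff.2 fun j => by
    simpa [w, mulVec_mulVec, ← pow_succ', ← pow_add] using hlast (j + (s + 1)) (by omega)
  have hKw : ∀ t : ℝ, K *ᵥ (exp (t • M) *ᵥ w) = Complex.exp (t * μ) • K *ᵥ w := fun t => by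
    rw [exp_smul_eq_exp_smul_exp_smul_sub_smul_one M μ, smul_mulVec, mulVec_smul,
      mulVec_exp_smul_mulVec_eq_mulVec hNw]
  have hpos : 0 < ‖K *ᵥ w‖ := norm_pos_iff.2 hs
  have hnorm : Tendsto (fun t : ℝ => ‖K *ᵥ (exp (t • M) *ᵥ w)‖) atTop (𝓝 0) := by
    simpa using (hK w hwW).norm
  obtain ⟨t, hlt, ht⟩ :=
    ((hnorm.eventually_lt_const hpos).and (eventually_ge_atTop 0)).exists
  rw [hKw, norm_smul, Complex.norm_exp, Complex.re_ofReal_mul] at hlt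
  nlinarith [Real.one_le_exp (mul_nonneg ht hμ)]

theorem tendsto_mulVec_exp_smul_mulVec_iff [Fintype ρ] :
    (∀ u ∈ unobservableSubspace M L,
      Tendsto (fun t : ℝ => K *ᵥ (exp (t • M) *ᵥ u)) atTop (𝓝 0)) ↔
    ∀ μ : ℂ, 0 ≤ μ.re → ∀ v ∈ unobservableSubspace M L,
      (M - μ • 1) ^ Fintype.card ι *ᵥ v = 0 → K *ᵥ v = 0 :=
  ⟨fun h _ hμ _ hv hk => mulVec_eq_zero_of_tendsto_mulVec_exp_smul_mulVec h hμ hv hk,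
    fun h _ hu => tendsto_mulVec_exp_smul_mulVec_nhds_zero h hu⟩

end Spectral

theorem mulVec_Dstack_eq_zero_iff {n : ℕ} {p : Type*} [Fintype p] (k : ℕ)
    (A : Matrix (Fin n) (Fin n) ℝ) (C : Matrix p (Fin n) ℝ) (lam : ℂ) (v : Fin n → ℂ) :
    Dstack k A C lam *ᵥ v = 0 ↔
      v ∈ unobservableSubspace (A.map Complex.ofReal) (C.map Complex.ofReal) ∧
        (A.map Complex.ofReal - lam • 1) ^ k *ᵥ v = 0 := by
  have hneg : lam • 1 - A.map Complex.ofReal = -(A.map Complex.ofReal - lam • 1) :=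
    (neg_sub _ _).symm
  have hpow : (A.map Complex.ofReal - lam • 1) ^ k *ᵥ v = 0 ↔
      (lam • 1 - A.map Complex.ofReal) ^ k *ᵥ v = 0 := by
    rw [hneg, ← neg_one_smul ℂ, smul_pow, smul_mulVec]
    simp
  rw [hpow, Dstack, fromRows_mulVec, ← Sum.elim_zero_zero, Sum.elim_eq_iff,
    ← unobservableSubspace_sub_smul_one lam, ← unobservableSubspace_neg, ← hneg]
  refine and_congr_left fun hk => Iff.trans ?_
    (mem_unobservableSubspace_iff_of_pow_mulVec_eq_zero hk).symm
  simp only [funext_iff, Prod.forall, Fin.forall_iff, mulVec_mulVec]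
  rfl

section RealSystem

variable {ι κ ρ : Type*} [Fintype ι]

def IsPartiallyDetectable (A : Matrix ι ι ℝ) (C : Matrix κ ι ℝ) (K : Matrix ρ ι ℝ) : Prop :=
  ∀ x : ℝ → ι → ℝ, Differentiable ℝ x → (∀ t, 0 ≤ t → deriv x t = A *ᵥ x t) →
    (∀ t, 0 ≤ t → C *ᵥ x t = 0) → Tendsto (fun t => K *ᵥ x t) atTop (𝓝 0)

theorem map_ofReal_mulVec (M : Matrix κ ι ℝ) (v : ι → ℝ) :
    M.map Complex.ofReal *ᵥ (fun i => (v i : ℂ)) = fun i => ((M *ᵥ v) i : ℂ) :=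
  funext fun i => (RingHom.map_mulVec Complex.ofRealHom M v i).symm

theorem apply_map_ofReal_mulVec {F : Type*} [FunLike F ℂ ℝ] [LinearMapClass F ℝ ℂ ℝ] (P : F)
    (M : Matrix κ ι ℝ) (w : ι → ℂ) :
    (fun i => P ((M.map Complex.ofReal *ᵥ w) i)) = M *ᵥ fun i => P (w i) := by
  funext i
  simp [mulVec, dotProduct, ← Complex.real_smul]

theorem IsPartiallyDetectable.tendsto_map_ofReal_mulVec {A : Matrix ι ι ℝ} {C : Matrix κ ι ℝ}
    {K : Matrix ρ ι ℝ} (hd : IsPartiallyDetectable A C K) {z : ℝ → ι → ℂ}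
    (hz : ∀ t, HasDerivAt z (A.map Complex.ofReal *ᵥ z t) t)
    (hC : ∀ t, 0 ≤ t → C.map Complex.ofReal *ᵥ z t = 0) :
    Tendsto (fun t => K.map Complex.ofReal *ᵥ z t) atTop (𝓝 0) := by
  -- the real and imaginary parts of `z` are real solutions
  have hpart : ∀ P : ℂ →L[ℝ] ℝ, Tendsto (fun t => K *ᵥ fun i => P (z t i)) atTop (𝓝 0) := by
    intro P
    have hPz : ∀ t, HasDerivAt (fun s i => P (z s i)) (A *ᵥ fun i => P (z t i)) t := fun t => by
      rw [← apply_map_ofReal_mulVec P]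
      exact hasDerivAt_pi.2 fun i => P.hasFDerivAt.comp_hasDerivAt t (hasDerivAt_pi.1 (hz t) i)
    refine hd _ (fun t => (hPz t).differentiableAt) (fun t _ => (hPz t).deriv) fun t ht => ?_
    rw [← apply_map_ofReal_mulVec P, hC t ht]
    exact funext fun _ => map_zero P
  have hcont : Continuous fun q : (ρ → ℝ) × (ρ → ℝ) =>
      fun i => (q.1 i : ℂ) + (q.2 i : ℂ) * Complex.I := by fun_prop
  have h := (hcont.tendsto (0, 0)).comp ((hpart Complex.reCLM).prodMk_nhds (hpart Complex.imCLM))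
  simp only [Pi.zero_apply, Complex.ofReal_zero, zero_mul, add_zero] at h
  refine h.congr fun t => funext fun i => ?_
  simp only [Function.comp_apply]
  rw [← congrFun (apply_map_ofReal_mulVec Complex.reCLM K (z t)) i,
    ← congrFun (apply_map_ofReal_mulVec Complex.imCLM K (z t)) i]
  exact Complex.re_add_im _

theorem isPartiallyDetectable_iff_tendsto [DecidableEq ι] [Fintype κ] {A : Matrix ι ι ℝ}
    {C : Matrix κ ι ℝ} {K : Matrix ρ ι ℝ} :
    IsPartiallyDetectable A C K ↔
      ∀ u ∈ unobservableSubspace (A.map Complex.ofReal) (C.map Complex.ofReal),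
        Tendsto (fun t : ℝ => K.map Complex.ofReal *ᵥ (exp (t • A.map Complex.ofReal) *ᵥ u))
          atTop (𝓝 0) := by
  refine ⟨fun hd u hu => hd.tendsto_map_ofReal_mulVec (hasDerivAt_exp_smul_mulVec _ u)
    fun t _ => mulVec_exp_smul_mulVec_eq_zero hu t, fun h x hx hxA hxC => ?_⟩
  set xc : ℝ → ι → ℂ := fun t i => (x t i : ℂ)
  have hxc : ∀ t, 0 ≤ t → HasDerivAt xc (A.map Complex.ofReal *ᵥ xc t) t := fun t ht => by
    rw [map_ofReal_mulVec, ← hxA t ht]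
    exact hasDerivAt_pi.2 fun i => (hasDerivAt_pi.1 (hx t).hasDerivAt i).ofReal_comp
  have hCxc : ∀ t, 0 ≤ t → C.map Complex.ofReal *ᵥ xc t = 0 := fun t ht => by
    rw [map_ofReal_mulVec, hxC t ht]
    exact funext fun _ => Complex.ofReal_zero
  have hKxc : Tendsto (fun t => K.map Complex.ofReal *ᵥ xc t) atTop (𝓝 0) := by
    refine (h _ (mem_unobservableSubspace_of_hasDerivAt hxc hCxc)).congr' ?_
    filter_upwards [eventually_ge_atTop 0] with t ht
    rw [eq_exp_smul_mulVec_of_hasDerivAt _ hxc ht]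
  have hre : Continuous fun w : ρ → ℂ => fun i => (w i).re := by fun_prop
  exact ((hre.tendsto 0).comp hKxc).congr fun t => funext fun i => by
    simp [xc, map_ofReal_mulVec]

end RealSystem

theorem isPartiallyDetectable_iff_rank {n : ℕ} {p q : Type*} [Fintype p] [Fintype q]
    (A : Matrix (Fin n) (Fin n) ℝ) (C : Matrix p (Fin n) ℝ) (K : Matrix q (Fin n) ℝ) :
    IsPartiallyDetectable A C K ↔
      ∀ lam : ℂ, 0 ≤ lam.re →
        (fromRows (Dstack n A C lam) (K.map Complex.ofReal)).rank = (Dstack n A C lam).rank := by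
  rw [isPartiallyDetectable_iff_tendsto, tendsto_mulVec_exp_smul_mulVec_iff, Fintype.card_fin]
  refine forall₂_congr fun lam _ => ?_
  rw [rank_fromRows_eq_rank_iff]
  simp only [SetLike.le_def, LinearMap.mem_ker, mulVecLin_apply, mulVec_Dstack_eq_zero_iff,
    and_imp]

end Matrix

/-- **Lemma 4 of the paper.** The multi-output system `(A, C₁, …, C_l)` is
jointly partially detectable with respect to `K` (ODE form) if and only if for every
`λ ∈ ℂ` with `Re λ ≥ 0`, `rank [D_{[A,C̃],n,λ}; K] = rank D_{[A,C̃],n,λ}`, where `C̃` is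
the vertical stack of `C₁, …, C_l`. -/
theorem stmt_10 (n r l : ℕ) (p : Fin l → ℕ)
    (A : Matrix (Fin n) (Fin n) ℝ)
    (C : (i : Fin l) → Matrix (Fin (p i)) (Fin n) ℝ)
    (K : Matrix (Fin r) (Fin n) ℝ)
    (Ctil : Matrix ((i : Fin l) × Fin (p i)) (Fin n) ℝ)
    (hCtil : ∀ (i : Fin l) (a : Fin (p i)) (j : Fin n), Ctil ⟨i, a⟩ j = C i a j) :
    (∀ x : ℝ → (Fin n → ℝ), Differentiable ℝ x →
        (∀ t : ℝ, 0 ≤ t → deriv x t = A.mulVec (x t)) →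
        (∀ t : ℝ, 0 ≤ t → ∀ i : Fin l, (C i).mulVec (x t) = 0) →
        Filter.Tendsto (fun t => K.mulVec (x t)) Filter.atTop (nhds 0)) ↔
    (∀ lam : ℂ, 0 ≤ lam.re →
        (Matrix.fromRows (Dstack n A Ctil lam) (K.map Complex.ofReal)).rank =
          (Dstack n A Ctil lam).rank) := by
  have hstack : ∀ y : Fin n → ℝ, (∀ i, C i *ᵥ y = 0) ↔ Ctil *ᵥ y = 0 := fun y => by
    simp only [funext_iff, Sigma.forall, Pi.zero_apply]
    refine forall_congr' fun i => forall_congr' fun a => ?_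
    simp [mulVec, dotProduct, hCtil]
  simp only [hstack]
  exact isPartiallyDetectable_iff_rank A Ctil K
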